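/- Let f : D → D be holomorphic and nonconstant. Then: (i) N(σ∘f∘τ) = N(f) for all automorphisms σ, τ of D; and (ii) there exist automorphisms σ, τ of D such that the function g = σ∘f∘τ satisfies g(0) = 0 and |g′(0)| ≥ N(f)/2. -/

import Mathlib

open Complex Filter Set

noncomputable section

/-- The open unit disc in the complex plane. -/
def unitD : Set ℂ := {z : ℂ | ‖z‖ < 1}

/-- The pseudohyperbolic distance ρ(z,w) = |z-w| / |1 - conj(w) z|. -/
def hrho (z w : ℂ) : ℝ := ‖(z - w) / (1 - (starRingEnd ℂ) w * z)‖

/-- The hyperbolic distance β(z,w) = log((1+ρ)/(1-ρ)). -/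
def hbeta (z w : ℂ) : ℝ := Real.log ((1 + hrho z w) / (1 - hrho z w))

/-- The hyperbolic disc of center z0 and radius R. -/
def hdisc (z0 : ℂ) (R : ℝ) : Set ℂ := {z : ℂ | z ∈ unitD ∧ hbeta z z0 < R}

/-- N(f) = sup over distinct z,w in the disc of β(f z, f w)/β(z,w). -/
def hN (f : ℂ → ℂ) : ℝ :=
  sSup {x : ℝ | ∃ z ∈ unitD, ∃ w ∈ unitD, z ≠ w ∧ x = hbeta (f z) (f w) / hbeta z w}

/-- Z is a sampling sequence for U with sampling constant δ. -/
def IsSamplingWith (Z : ℕ → ℂ) (δ : ℝ) : Prop :=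
  ∀ f : ℂ → ℂ, DifferentiableOn ℂ f unitD → Set.MapsTo f unitD unitD →
    (∃ z ∈ unitD, ∃ w ∈ unitD, f z ≠ f w) →
    δ * hN f ≤
      sSup {x : ℝ | ∃ n m : ℕ, n ≠ m ∧ x = hbeta (f (Z n)) (f (Z m)) / hbeta (Z n) (Z m)}

/-- An automorphism of the unit disc: τ(z) = λ (z - z0)/(1 - conj(z0) z), |λ| = 1, z0 ∈ D. -/
def IsDiscAut (τ : ℂ → ℂ) : Prop :=
  ∃ lam z0 : ℂ, ‖lam‖ = 1 ∧ z0 ∈ unitD ∧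
    ∀ z : ℂ, τ z = lam * ((z - z0) / (1 - (starRingEnd ℂ) z0 * z))

lemma mem_unitD {z : ℂ} : z ∈ unitD ↔ ‖z‖ < 1 := Iff.rfl

lemma unitD_eq_ball : unitD = Metric.ball (0:ℂ) 1 := by
  ext z; simp [unitD, Metric.mem_ball, Complex.dist_eq]

lemma den_ne {z w : ℂ} (hz : z ∈ unitD) (hw : w ∈ unitD) :
    (1 : ℂ) - (starRingEnd ℂ) w * z ≠ 0 := by
  intro h
  have h1 : (starRingEnd ℂ) w * z = 1 := by linear_combination -h
  have := congrArg norm h1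
  rw [norm_mul, norm_one, Complex.norm_conj] at this
  nlinarith [mem_unitD.1 hz, mem_unitD.1 hw, norm_nonneg z, norm_nonneg w]

lemma hrho_eq (z w : ℂ) :
    hrho z w = ‖z - w‖ / ‖1 - (starRingEnd ℂ) w * z‖ := by
  simp [hrho, map_div₀]

lemma normSq_key (z w : ℂ) :
    Complex.normSq (1 - (starRingEnd ℂ) w * z) - Complex.normSq (z - w)
      = (1 - Complex.normSq z) * (1 - Complex.normSq w) := by
  simp only [Complex.normSq_apply, Complex.sub_re, Complex.sub_im, Complex.one_re,
    Complex.one_im, Complex.mul_re, Complex.mul_im, Complex.conj_re, Complex.conj_im]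
  ring

lemma abs_sub_lt {z w : ℂ} (hz : z ∈ unitD) (hw : w ∈ unitD) :
    ‖z - w‖ < ‖1 - (starRingEnd ℂ) w * z‖ := by
  have h1 : Complex.normSq (z - w) < Complex.normSq (1 - (starRingEnd ℂ) w * z) := by
    have := normSq_key z w
    have hz' : Complex.normSq z < 1 := by
      rw [← Complex.sq_norm]; nlinarith [mem_unitD.1 hz, norm_nonneg z]
    have hw' : Complex.normSq w < 1 := by
      rw [← Complex.sq_norm]; nlinarith [mem_unitD.1 hw, norm_nonneg w]
    nlinarith
  have := Real.sqrt_lt_sqrt (Complex.normSq_nonneg _) h1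
  rwa [← Complex.norm_def, ← Complex.norm_def] at this

lemma den_pos {z w : ℂ} (hz : z ∈ unitD) (hw : w ∈ unitD) :
    0 < ‖1 - (starRingEnd ℂ) w * z‖ :=
  norm_pos_iff.mpr (den_ne hz hw)

lemma hrho_lt_one {z w : ℂ} (hz : z ∈ unitD) (hw : w ∈ unitD) : hrho z w < 1 := by
  rw [hrho_eq]
  exact (div_lt_one (den_pos hz hw)).2 (abs_sub_lt hz hw)

lemma hrho_nonneg (z w : ℂ) : 0 ≤ hrho z w := norm_nonneg _

lemma hrho_symm (z w : ℂ) : hrho z w = hrho w z := by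
  rw [hrho_eq, hrho_eq]
  congr 1
  · rw [← norm_neg]; ring_nf
  · rw [← Complex.norm_conj]
    congr 1
    simp [map_sub, map_mul, Complex.conj_conj]
    ring

lemma hrho_pos {z w : ℂ} (hz : z ∈ unitD) (hw : w ∈ unitD) (hzw : z ≠ w) :
    0 < hrho z w := by
  rw [hrho_eq]
  apply div_pos _ (den_pos hz hw)
  rw [norm_pos_iff, sub_ne_zero]; exact hzw

lemma hrho_self (z : ℂ) : hrho z z = 0 := by simp [hrho]

lemma hbeta_self (z : ℂ) : hbeta z z = 0 := by simp [hbeta, hrho_self]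

lemma hbeta_symm (z w : ℂ) : hbeta z w = hbeta w z := by rw [hbeta, hbeta, hrho_symm]

lemma L_mono {a b : ℝ} (ha : 0 ≤ a) (hab : a ≤ b) (hb : b < 1) :
    Real.log ((1 + a) / (1 - a)) ≤ Real.log ((1 + b) / (1 - b)) := by
  have ha1 : a < 1 := lt_of_le_of_lt hab hb
  apply Real.log_le_log (div_pos (by linarith) (by linarith))
  rw [div_le_div_iff₀ (by linarith) (by linarith)]
  nlinarith

lemma L_pos {a : ℝ} (ha : 0 < a) (ha1 : a < 1) : 0 < Real.log ((1 + a) / (1 - a)) := by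
  apply Real.log_pos
  rw [lt_div_iff₀ (by linarith)]; linarith

lemma L_nonneg {a : ℝ} (ha : 0 ≤ a) (ha1 : a < 1) : 0 ≤ Real.log ((1 + a) / (1 - a)) := by
  rcases eq_or_lt_of_le ha with h | h
  · simp [← h]
  · exact (L_pos h ha1).le

lemma hbeta_pos {z w : ℂ} (hz : z ∈ unitD) (hw : w ∈ unitD) (hzw : z ≠ w) :
    0 < hbeta z w := L_pos (hrho_pos hz hw hzw) (hrho_lt_one hz hw)

lemma hbeta_nonneg {z w : ℂ} (hz : z ∈ unitD) (hw : w ∈ unitD) :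
    0 ≤ hbeta z w := L_nonneg (hrho_nonneg z w) (hrho_lt_one hz hw)

def auT (lam z0 : ℂ) (z : ℂ) : ℂ := lam * ((z - z0) / (1 - (starRingEnd ℂ) z0 * z))

lemma conj_mul_self_eq_one {lam : ℂ} (hl : ‖lam‖ = 1) :
    (starRingEnd ℂ) lam * lam = 1 := by
  rw [mul_comm, Complex.mul_conj]
  norm_cast
  rw [← Complex.sq_norm, hl]; norm_num

lemma abs_auT {lam z0 z : ℂ} (hl : ‖lam‖ = 1) :
    ‖auT lam z0 z‖ = hrho z z0 := by
  rw [auT, norm_mul, hl, one_mul, hrho]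

lemma auT_mem {lam z0 z : ℂ} (hl : ‖lam‖ = 1) (h0 : z0 ∈ unitD)
    (hz : z ∈ unitD) : auT lam z0 z ∈ unitD := by
  rw [mem_unitD, abs_auT hl]
  exact hrho_lt_one hz h0

lemma one_sub_normSq_ne {z0 : ℂ} (h0 : z0 ∈ unitD) : (1:ℂ) - z0 * (starRingEnd ℂ) z0 ≠ 0 := by
  rw [Complex.mul_conj]
  intro h
  have h2 : Complex.normSq z0 = 1 := by
    have := congrArg Complex.re h; simp at this; linarith
  have h3 := mem_unitD.1 h0
  rw [← Complex.sq_norm] at h2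
  nlinarith [norm_nonneg z0]

lemma hrho_rot {lam a b : ℂ} (hl : ‖lam‖ = 1) :
    hrho (lam * a) (lam * b) = hrho a b := by
  have hl2 : (starRingEnd ℂ) lam * lam = 1 := conj_mul_self_eq_one hl
  rw [hrho_eq, hrho_eq]
  have h1 : (1:ℂ) - (starRingEnd ℂ) (lam * b) * (lam * a) = 1 - (starRingEnd ℂ) b * a := by
    rw [map_mul]
    linear_combination (-((starRingEnd ℂ) b * a)) * hl2
  rw [h1]
  congr 1
  rw [← mul_sub, norm_mul, hl, one_mul]

lemma auT_eq_rot (lam z0 z : ℂ) : auT lam z0 z = lam * auT 1 z0 z := by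
  rw [auT, auT, one_mul]

lemma auT_invariance {lam z0 z w : ℂ} (hl : ‖lam‖ = 1) (h0 : z0 ∈ unitD)
    (hz : z ∈ unitD) (hw : w ∈ unitD) :
    hrho (auT lam z0 z) (auT lam z0 w) = hrho z w := by
  rw [auT_eq_rot lam z0 z, auT_eq_rot lam z0 w, hrho_rot hl]
  -- now lam = 1 case
  have hA : (1:ℂ) - (starRingEnd ℂ) z0 * z ≠ 0 := den_ne hz h0
  have hB : (1:ℂ) - (starRingEnd ℂ) z0 * w ≠ 0 := den_ne hw h0
  have hBc : (1:ℂ) - z0 * (starRingEnd ℂ) w ≠ 0 := by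
    intro h
    apply den_ne hw h0
    have h2 := congrArg (starRingEnd ℂ) h
    simp only [map_sub, map_mul, Complex.conj_conj, map_one, map_zero] at h2
    exact h2
  have hone : ‖(1:ℂ)‖ = 1 := norm_one
  have hv : (1:ℂ) - (starRingEnd ℂ) (auT 1 z0 w) * auT 1 z0 z ≠ 0 :=
    den_ne (auT_mem hone h0 hz) (auT_mem hone h0 hw)
  set u := auT 1 z0 z - auT 1 z0 w with hu
  set v := (1:ℂ) - (starRingEnd ℂ) (auT 1 z0 w) * auT 1 z0 z with hvdef
  have key : u * (((1:ℂ) - (starRingEnd ℂ) z0 * w) * (1 - (starRingEnd ℂ) w * z))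
      = v * (((1:ℂ) - z0 * (starRingEnd ℂ) w) * (z - w)) := by
    rw [hu, hvdef]
    simp only [auT, map_mul, map_div₀, map_sub, map_one, Complex.conj_conj, one_mul]
    have hA' : (1:ℂ) - z * (starRingEnd ℂ) z0 ≠ 0 := by rwa [mul_comm]
    have hB' : (1:ℂ) - w * (starRingEnd ℂ) z0 ≠ 0 := by rwa [mul_comm]
    have hBc' : (1:ℂ) - (starRingEnd ℂ) w * z0 ≠ 0 := by rwa [mul_comm]
    field_simp
    ring
  have habs := congrArg norm key
  rw [norm_mul, norm_mul, norm_mul, norm_mul] at habs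
  have hBceq : ‖(1:ℂ) - z0 * (starRingEnd ℂ) w‖
      = ‖(1:ℂ) - (starRingEnd ℂ) z0 * w‖ := by
    rw [← Complex.norm_conj ((1:ℂ) - (starRingEnd ℂ) z0 * w)]
    congr 1
    simp [map_sub, map_mul, Complex.conj_conj]
  rw [hrho_eq (auT 1 z0 z) (auT 1 z0 w), hrho_eq z w, ← hu, ← hvdef]
  rw [hBceq] at habs
  have h1 : (0:ℝ) < ‖v‖ := norm_pos_iff.mpr hv
  have h2 : (0:ℝ) < ‖(1:ℂ) - (starRingEnd ℂ) z0 * w‖ := norm_pos_iff.mpr hB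
  have h3 : (0:ℝ) < ‖(1:ℂ) - (starRingEnd ℂ) w * z‖ := norm_pos_iff.mpr (den_ne hz hw)
  rw [div_eq_div_iff h1.ne' h3.ne']
  have key2 : ‖u‖ * ‖(1:ℂ) - (starRingEnd ℂ) w * z‖
      = ‖v‖ * ‖z - w‖ := by
    apply mul_left_cancel₀ h2.ne'
    linear_combination habs
  linear_combination key2

lemma one_sub_normSq_ne' {z0 : ℂ} (h0 : z0 ∈ unitD) : (1:ℂ) - (starRingEnd ℂ) z0 * z0 ≠ 0 := by
  rw [mul_comm]; exact one_sub_normSq_ne h0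

lemma auT_leftinv {lam z0 z : ℂ} (hl : ‖lam‖ = 1) (h0 : z0 ∈ unitD)
    (hz : z ∈ unitD) : auT ((starRingEnd ℂ) lam) (-(lam * z0)) (auT lam z0 z) = z := by
  have hA : (1:ℂ) - (starRingEnd ℂ) z0 * z ≠ 0 := den_ne hz h0
  have hN : (1:ℂ) - (starRingEnd ℂ) z0 * z0 ≠ 0 := one_sub_normSq_ne' h0
  have hl2 : (starRingEnd ℂ) lam * lam = 1 := conj_mul_self_eq_one hl
  have hden : (1:ℂ) - (starRingEnd ℂ) (-(lam * z0)) * (auT lam z0 z)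
      = (1 - (starRingEnd ℂ) z0 * z0) / (1 - (starRingEnd ℂ) z0 * z) := by
    simp only [auT, map_neg, map_mul]
    field_simp
    linear_combination (starRingEnd ℂ) z0 * (z - z0) * hl2
  have hnum : auT lam z0 z - (-(lam * z0))
      = lam * (z * (1 - (starRingEnd ℂ) z0 * z0)) / (1 - (starRingEnd ℂ) z0 * z) := by
    rw [eq_div_iff hA]
    simp only [auT]
    rw [sub_mul, mul_assoc lam, div_mul_cancel₀ _ hA]
    ring
  rw [auT, hden, hnum]
  rw [div_div_div_cancel_right₀]
  · field_simp
    linear_combination z * hl2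
  · exact hA

lemma auT_diffOn {lam z0 : ℂ} (h0 : z0 ∈ unitD) :
    DifferentiableOn ℂ (auT lam z0) unitD := by
  apply DifferentiableOn.const_mul
  apply DifferentiableOn.div
  · exact (differentiable_id.sub_const z0).differentiableOn
  · exact ((differentiable_id.const_mul ((starRingEnd ℂ) z0)).const_sub 1).differentiableOn
  · exact fun z hz => den_ne hz h0

lemma neg_mem_unitD {w : ℂ} (hw : w ∈ unitD) : -w ∈ unitD := by
  rw [mem_unitD] at *; simpa using hw

lemma auT_zero (lam z0 : ℂ) : auT lam z0 z0 = 0 := by simp [auT]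

lemma auT_at_zero {z : ℂ} : auT 1 (-z) 0 = z := by simp [auT]

lemma auT_inv_left {w z : ℂ} (hw : w ∈ unitD) (hz : z ∈ unitD) :
    auT 1 (-w) (auT 1 w z) = w + (auT 1 (-w) (auT 1 w z) - w) := by ring

lemma auT_cancel {w z : ℂ} (hw : w ∈ unitD) (hz : z ∈ unitD) :
    auT 1 (-w) (auT 1 w z) = z := by
  have h := auT_leftinv (lam := 1) (z0 := w) (norm_one) hw hz
  simpa using h

lemma schwarz_pick {F : ℂ → ℂ} (hF : DifferentiableOn ℂ F unitD)
    (hm : MapsTo F unitD unitD) {z w : ℂ} (hz : z ∈ unitD) (hw : w ∈ unitD) :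
    hrho (F z) (F w) ≤ hrho z w := by
  have hone : ‖(1:ℂ)‖ = 1 := norm_one
  have hwm : -w ∈ unitD := neg_mem_unitD hw
  have hFwm : F w ∈ unitD := hm hw
  set τ : ℂ → ℂ := auT 1 (-w) with hτ
  set σ : ℂ → ℂ := auT 1 (F w) with hσ
  have hτd : DifferentiableOn ℂ τ unitD := auT_diffOn hwm
  have hτm : MapsTo τ unitD unitD := fun x hx => auT_mem hone hwm hx
  have hσd : DifferentiableOn ℂ σ unitD := auT_diffOn hFwm
  have hσm : MapsTo σ unitD unitD := fun x hx => auT_mem hone hFwm hx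
  set G : ℂ → ℂ := σ ∘ F ∘ τ with hG
  have hGd : DifferentiableOn ℂ G unitD :=
    hσd.comp (hF.comp hτd hτm) ((hm.comp hτm))
  have hGm : MapsTo G unitD unitD := (hσm.comp (hm.comp hτm))
  have hG0 : G 0 = 0 := by
    simp only [hG, Function.comp_apply, hτ, auT_at_zero, hσ, auT_zero]
  set u := auT 1 w z with hu
  have hum : u ∈ unitD := auT_mem hone hw hz
  have hτu : τ u = z := auT_cancel hw hz
  have hsch : ‖G u‖ ≤ ‖u‖ := by
    apply Complex.norm_le_norm_of_mapsTo_ball_self (R := 1)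
    · rw [← unitD_eq_ball]; exact hGd
    · rw [← unitD_eq_ball]; exact hGm.mono_right (by rw [unitD_eq_ball]; exact Metric.ball_subset_closedBall)
    · exact hG0
    · exact mem_unitD.1 hum
  have hGu : G u = σ (F z) := by
    simp only [hG, Function.comp_apply, hτu]
  rw [hGu] at hsch
  rw [hσ, abs_auT hone, hu, abs_auT hone] at hsch
  exact hsch

lemma normSq_sub_eq (a c : ℂ) :
    Complex.normSq (a - c) = Complex.normSq a + Complex.normSq c - 2 * (a * (starRingEnd ℂ) c).re := by
  simp only [Complex.normSq_apply, Complex.sub_re, Complex.sub_im, Complex.mul_re,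
    Complex.mul_im, Complex.conj_re, Complex.conj_im]
  ring

lemma normSq_one_sub_eq (a c : ℂ) :
    Complex.normSq (1 - (starRingEnd ℂ) c * a)
      = 1 + Complex.normSq a * Complex.normSq c - 2 * (a * (starRingEnd ℂ) c).re := by
  simp only [Complex.normSq_apply, Complex.sub_re, Complex.sub_im, Complex.one_re, Complex.one_im,
    Complex.mul_re, Complex.mul_im, Complex.conj_re, Complex.conj_im]
  ring

lemma rho_tri0 {a c : ℂ} (ha : a ∈ unitD) (hc : c ∈ unitD) :
    hrho a c ≤ (‖a‖ + ‖c‖) / (1 + ‖a‖ * ‖c‖) := by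
  set A := ‖a‖ with hA
  set C := ‖c‖ with hC
  have hA0 : 0 ≤ A := norm_nonneg a
  have hC0 : 0 ≤ C := norm_nonneg c
  have hA1 : A < 1 := mem_unitD.1 ha
  have hC1 : C < 1 := mem_unitD.1 hc
  set t := (a * (starRingEnd ℂ) c).re with htdef
  have ht : |t| ≤ A * C := by
    have h1 := Complex.abs_re_le_norm (a * (starRingEnd ℂ) c)
    rwa [norm_mul, Complex.norm_conj] at h1
  have ht' : -(A*C) ≤ t := neg_le_of_abs_le ht
  have hsq : (‖a - c‖ * (1 + A * C))^2
      ≤ ((A + C) * ‖1 - (starRingEnd ℂ) c * a‖)^2 := by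
    rw [mul_pow, mul_pow, Complex.sq_norm, Complex.sq_norm, normSq_sub_eq, normSq_one_sub_eq]
    rw [← Complex.sq_norm, ← Complex.sq_norm, ← hA, ← hC]
    nlinarith [mul_nonneg (mul_nonneg hA0 hC0) (add_nonneg hA0 hC0),
      mul_nonneg hA0 hC0, sq_nonneg (A - C), sq_nonneg (A + C), sq_nonneg (1 - A*C),
      mul_nonneg (sub_nonneg.2 ht') (mul_nonneg (sub_nonneg.2 hA1.le) (sub_nonneg.2 hC1.le)),
      mul_nonneg (sub_nonneg.2 ht') (sub_nonneg.2 (mul_le_one₀ hA1.le hC0 hC1.le))]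
    
  have habs : ‖a - c‖ * (1 + A * C) ≤ (A + C) * ‖1 - (starRingEnd ℂ) c * a‖ := by
    have h1 : 0 ≤ ‖a - c‖ * (1 + A * C) := by positivity
    have h2 : 0 ≤ (A + C) * ‖1 - (starRingEnd ℂ) c * a‖ := by positivity
    nlinarith
  rw [hrho_eq, div_le_div_iff₀ (den_pos ha hc) (by positivity)]
  linarith

lemma rho_tri {a b c : ℂ} (ha : a ∈ unitD) (hb : b ∈ unitD) (hc : c ∈ unitD) :
    hrho a c ≤ (hrho a b + hrho b c) / (1 + hrho a b * hrho b c) := by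
  have hone : ‖(1:ℂ)‖ = 1 := norm_one
  have h1 : hrho a c = hrho (auT 1 b a) (auT 1 b c) := (auT_invariance hone hb ha hc).symm
  have h2 : ‖auT 1 b a‖ = hrho a b := abs_auT hone
  have h3 : ‖auT 1 b c‖ = hrho b c := by rw [abs_auT hone, hrho_symm]
  rw [h1]
  have := rho_tri0 (auT_mem hone hb ha) (auT_mem hone hb hc)
  rwa [h2, h3] at this

lemma hbeta_tri {a b c : ℂ} (ha : a ∈ unitD) (hb : b ∈ unitD) (hc : c ∈ unitD) :
    hbeta a c ≤ hbeta a b + hbeta b c := by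
  set p := hrho a b with hp
  set q := hrho b c with hq
  set r := hrho a c with hr
  have hp0 : 0 ≤ p := hrho_nonneg a b
  have hq0 : 0 ≤ q := hrho_nonneg b c
  have hr0 : 0 ≤ r := hrho_nonneg a c
  have hp1 : p < 1 := hrho_lt_one ha hb
  have hq1 : q < 1 := hrho_lt_one hb hc
  have hkey : r ≤ (p + q) / (1 + p * q) := rho_tri ha hb hc
  have hx1 : (p + q) / (1 + p * q) < 1 := by
    rw [div_lt_one (by nlinarith)]
    nlinarith
  have hL : hbeta a c ≤ Real.log ((1 + (p+q)/(1+p*q)) / (1 - (p+q)/(1+p*q))) :=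
    L_mono hr0 hkey hx1
  have h1 : (0:ℝ) < 1 + p * q := by nlinarith
  have e1 : 1 + (p+q)/(1+p*q) = (1+p)*(1+q)/(1+p*q) := by field_simp; ring
  have e2 : 1 - (p+q)/(1+p*q) = (1-p)*(1-q)/(1+p*q) := by field_simp; ring
  have hsplit : (1 + (p+q)/(1+p*q)) / (1 - (p+q)/(1+p*q))
      = ((1 + p)/(1 - p)) * ((1 + q)/(1 - q)) := by
    rw [e1, e2, div_div_div_cancel_right₀, mul_div_mul_comm]
    exact h1.ne'
  rw [hsplit, Real.log_mul (ne_of_gt (div_pos (by linarith) (by linarith)))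
    (ne_of_gt (div_pos (by linarith) (by linarith)))] at hL
  exact hL

lemma hrho_zero_left (u : ℂ) : hrho 0 u = ‖u‖ := by
  simp [hrho_eq]

lemma hrho_zero_right (u : ℂ) : hrho u 0 = ‖u‖ := by
  simp [hrho_eq]

lemma abs_conj_one {lam : ℂ} (hl : ‖lam‖ = 1) :
    ‖(starRingEnd ℂ) lam‖ = 1 := by rw [Complex.norm_conj]; exact hl

lemma neg_mul_mem_unitD {lam b : ℂ} (hl : ‖lam‖ = 1) (hb : b ∈ unitD) :
    -(lam * b) ∈ unitD := by
  rw [mem_unitD, norm_neg, norm_mul, hl, one_mul]; exact hb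

lemma auT_rightinv {lam z0 z : ℂ} (hl : ‖lam‖ = 1) (h0 : z0 ∈ unitD)
    (hz : z ∈ unitD) :
    auT lam z0 (auT ((starRingEnd ℂ) lam) (-(lam * z0)) z) = z := by
  have hl2 : (starRingEnd ℂ) lam * lam = 1 := conj_mul_self_eq_one hl
  have hl' : ‖(starRingEnd ℂ) lam‖ = 1 := abs_conj_one hl
  have h0' : -(lam * z0) ∈ unitD := neg_mul_mem_unitD hl h0
  have h := auT_leftinv (lam := (starRingEnd ℂ) lam) (z0 := -(lam*z0)) hl' h0' hz
  rw [Complex.conj_conj] at h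
  have e : -((starRingEnd ℂ) lam * -(lam * z0)) = z0 := by linear_combination z0 * hl2
  rwa [e] at h

lemma hbeta_auT_inv {lam z0 z w : ℂ} (hl : ‖lam‖ = 1) (h0 : z0 ∈ unitD)
    (hz : z ∈ unitD) (hw : w ∈ unitD) :
    hbeta (auT lam z0 z) (auT lam z0 w) = hbeta z w := by
  rw [hbeta, hbeta, auT_invariance hl h0 hz hw]

lemma L_le {x : ℝ} (hx0 : 0 ≤ x) (hx1 : x < 1) :
    Real.log ((1 + x) / (1 - x)) ≤ 2*x/(1-x) := by
  have h1 : (0:ℝ) < (1 + x)/(1 - x) := div_pos (by linarith) (by linarith)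
  have h2 := Real.log_le_sub_one_of_pos h1
  have hne : (1:ℝ) - x ≠ 0 := by linarith
  have h3 : (1 + x)/(1 - x) - 1 = 2*x/(1-x) := by
    field_simp
    ring
  linarith [h3 ▸ h2]

lemma L_ge {x : ℝ} (hx0 : 0 ≤ x) (hx1 : x < 1) :
    2*x/(1+x) ≤ Real.log ((1 + x) / (1 - x)) := by
  have h1 : (0:ℝ) < (1 - x)/(1 + x) := div_pos (by linarith) (by linarith)
  have h2 := Real.log_le_sub_one_of_pos h1
  have h4 : Real.log ((1 - x)/(1 + x)) = - Real.log ((1 + x)/(1 - x)) := by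
    rw [← Real.log_inv]
    congr 1
    rw [inv_div]
  rw [h4] at h2
  have h5 : (1 - x)/(1 + x) - 1 = -(2*x/(1+x)) := by
    field_simp
    ring
  linarith [h5 ▸ h2]

lemma hrho_le_hbeta {z w : ℂ} (hz : z ∈ unitD) (hw : w ∈ unitD) :
    hrho z w ≤ hbeta z w := by
  set x := hrho z w with hx
  have hx0 : 0 ≤ x := hrho_nonneg z w
  have hx1 : x < 1 := hrho_lt_one hz hw
  have h1 := L_ge hx0 hx1
  have h2 : x ≤ 2*x/(1+x) := by
    rw [le_div_iff₀ (by linarith)]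
    nlinarith
  exact le_trans h2 h1

lemma ratio_facts {c0 : ℝ} (hc0 : 0 < c0) {f : ℂ → ℂ} {z w : ℂ}
    (hz : z ∈ unitD) (hw : w ∈ unitD)
    (h : c0 < hbeta (f z) (f w) / hbeta z w) : 0 < hbeta z w ∧ z ≠ w := by
  have hd0 : 0 < hbeta z w := by
    rcases lt_or_ge 0 (hbeta z w) with h' | h'
    · exact h'
    · exfalso
      have h0 : hbeta z w = 0 := le_antisymm h' (hbeta_nonneg hz hw)
      rw [h0, div_zero] at h; linarith
  refine ⟨hd0, ?_⟩
  rintro rfl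
  rw [hbeta_self] at hd0; exact lt_irrefl _ hd0

lemma midpoint_step (f : ℂ → ℂ) (hmap : Set.MapsTo f unitD unitD) {c0 : ℝ} (hc0 : 0 < c0)
    {z w : ℂ} (hz : z ∈ unitD) (hw : w ∈ unitD)
    (h : c0 < hbeta (f z) (f w) / hbeta z w) :
    ∃ z' w', z' ∈ unitD ∧ w' ∈ unitD ∧ c0 < hbeta (f z') (f w') / hbeta z' w' ∧
      hbeta z' w' = hbeta z w / 2 := by
  obtain ⟨hd0, hzw⟩ := ratio_facts hc0 hz hw h
  have hone : ‖(1:ℂ)‖ = 1 := norm_one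
  set w'' := auT 1 z w with hw''def
  have hw''mem : w'' ∈ unitD := auT_mem hone hz hw
  have hw''ne : w'' ≠ 0 := by
    rw [hw''def, auT, one_mul]
    apply div_ne_zero
    · exact sub_ne_zero.2 (Ne.symm hzw)
    · exact den_ne hw hz
  set s := ‖w''‖ with hsdef
  have hs0 : 0 < s := norm_pos_iff.mpr hw''ne
  have hs1 : s < 1 := mem_unitD.1 hw''mem
  set q := Real.sqrt (1 - s^2) with hqdef
  have hq2 : q^2 = 1 - s^2 := Real.sq_sqrt (by nlinarith)
  have hq0 : 0 < q := Real.sqrt_pos.2 (by nlinarith)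
  have hq1 : q ≤ 1 := by nlinarith
  set c := 1/(1+q) with hcdef
  have hcq : c * (1 + q) = 1 := by rw [hcdef]; field_simp
  have hc0' : 0 < c := by rw [hcdef]; positivity
  have hc1 : c < 1 := by rw [hcdef, div_lt_one (by linarith)]; linarith
  have hcs1 : c * s < 1 := by nlinarith
  have hcs0 : 0 < c * s := mul_pos hc0' hs0
  have hcwmem : (c:ℂ) * w'' ∈ unitD := by
    rw [mem_unitD, norm_mul, Complex.norm_real, Real.norm_eq_abs, abs_of_pos hc0', ← hsdef]
    nlinarith
  set m := auT 1 (-z) ((c:ℂ) * w'') with hmdef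
  have hzmem' : -z ∈ unitD := neg_mem_unitD hz
  have hmmem : m ∈ unitD := auT_mem hone hzmem' hcwmem
  have h0mem : (0:ℂ) ∈ unitD := by rw [mem_unitD]; simp
  have habs_cw : ‖(c:ℂ) * w''‖ = c * s := by
    rw [norm_mul, Complex.norm_real, Real.norm_eq_abs, abs_of_pos hc0']
  have hzm : hbeta z m = Real.log ((1 + c*s)/(1 - c*s)) := by
    have e1 : z = auT 1 (-z) 0 := auT_at_zero.symm
    calc hbeta z m = hbeta (auT 1 (-z) 0) (auT 1 (-z) ((c:ℂ)*w'')) := by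
          rw [← e1, hmdef]
      _ = hbeta 0 ((c:ℂ)*w'') := hbeta_auT_inv hone hzmem' h0mem hcwmem
      _ = _ := by rw [hbeta, hrho_zero_left, habs_cw]
  have hzw2 : hbeta z w = Real.log ((1 + s)/(1 - s)) := by
    have e1 : z = auT 1 (-z) 0 := auT_at_zero.symm
    have e2 : w = auT 1 (-z) w'' := (auT_cancel hz hw).symm
    calc hbeta z w = hbeta (auT 1 (-z) 0) (auT 1 (-z) w'') := by rw [← e1, ← e2]
      _ = hbeta 0 w'' := hbeta_auT_inv hone hzmem' h0mem hw''mem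
      _ = _ := by rw [hbeta, hrho_zero_left, ← hsdef]
  have hmw : hbeta m w = Real.log ((1 + c*s)/(1 - c*s)) := by
    have e2 : w = auT 1 (-z) w'' := (auT_cancel hz hw).symm
    have e3 : hrho ((c:ℂ)*w'') w'' = c*s := by
      rw [hrho_eq]
      have eN : ‖(c:ℂ)*w'' - w''‖ = (1-c)*s := by
        have e5 : (c:ℂ)*w'' - w'' = (((c - 1 : ℝ)) : ℂ) * w'' := by push_cast; ring
        rw [e5, norm_mul, Complex.norm_real, Real.norm_eq_abs, abs_of_neg (by linarith), ← hsdef]; ring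
      have eD : ‖1 - (starRingEnd ℂ) w'' * ((c:ℂ)*w'')‖ = 1 - c*s^2 := by
        have e6 : (starRingEnd ℂ) w'' * w'' = ((Complex.normSq w'' : ℝ) : ℂ) := by
          rw [mul_comm, Complex.mul_conj]
        have e7 : Complex.normSq w'' = s^2 := by rw [← Complex.sq_norm, hsdef]
        have e8 : (1:ℂ) - (starRingEnd ℂ) w'' * ((c:ℂ)*w'') = (((1 - c*s^2 : ℝ)) : ℂ) := by
          rw [show (starRingEnd ℂ) w'' * ((c:ℂ)*w'') = (c:ℂ) * ((starRingEnd ℂ) w'' * w'')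
            from by ring, e6, e7]
          push_cast; ring
        rw [e8, Complex.norm_real, Real.norm_eq_abs, abs_of_pos (by nlinarith)]
      rw [eN, eD, div_eq_iff (by nlinarith : (1:ℝ) - c*s^2 ≠ 0)]
      linear_combination (-s*(1-c+c*q)) * hcq + (s*c^2) * hq2
    calc hbeta m w = hbeta (auT 1 (-z) ((c:ℂ)*w'')) (auT 1 (-z) w'') := by
          rw [← hmdef, ← e2]
      _ = hbeta ((c:ℂ)*w'') w'' := hbeta_auT_inv hone hzmem' hcwmem hw''mem
      _ = _ := by rw [hbeta, e3]
  have hhalf : Real.log ((1 + c*s)/(1 - c*s)) = hbeta z w / 2 := by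
    have hXpos : (0:ℝ) < (1 + c*s)/(1 - c*s) := div_pos (by nlinarith) (by nlinarith)
    have hsq : (1 + s)/(1 - s) = ((1 + c*s)/(1 - c*s))^2 := by
      rw [div_pow, div_eq_div_iff (by nlinarith) (ne_of_gt (by nlinarith : (0:ℝ) < ((1:ℝ)-c*s)^2))]
      linear_combination (-2*s*(1-c+c*q))*hcq + (2*s*c^2)*hq2
    rw [hzw2, hsq, Real.log_pow]
    push_cast; ring
  have htri : hbeta (f z) (f w) ≤ hbeta (f z) (f m) + hbeta (f m) (f w) :=
    hbeta_tri (hmap hz) (hmap hmmem) (hmap hw)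
  have hratio : c0 * hbeta z w < hbeta (f z) (f w) := (lt_div_iff₀ hd0).1 h
  by_cases hcase : c0 < hbeta (f z) (f m) / hbeta z m
  · exact ⟨z, m, hz, hmmem, hcase, by rw [hzm, hhalf]⟩
  · refine ⟨m, w, hmmem, hw, ?_, by rw [hmw, hhalf]⟩
    push_neg at hcase
    have hzm_pos : 0 < hbeta z m := by rw [hzm, hhalf]; linarith
    have h1 : hbeta (f z) (f m) ≤ c0 * hbeta z m := (div_le_iff₀ hzm_pos).1 hcase
    rw [hzm, hhalf] at h1
    have hmw_pos : 0 < hbeta m w := by rw [hmw, hhalf]; linarith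
    rw [lt_div_iff₀ hmw_pos, hmw, hhalf]
    linarith

lemma exists_small_pair (f : ℂ → ℂ) (hmap : Set.MapsTo f unitD unitD) {c0 : ℝ}
    (hc0 : 0 < c0) {z0 w0 : ℂ} (hz0 : z0 ∈ unitD) (hw0 : w0 ∈ unitD)
    (h0 : c0 < hbeta (f z0) (f w0) / hbeta z0 w0) (k : ℕ) :
    ∃ z w, z ∈ unitD ∧ w ∈ unitD ∧ c0 < hbeta (f z) (f w) / hbeta z w ∧
      hbeta z w ≤ hbeta z0 w0 / 2^k := by
  induction k with
  | zero => exact ⟨z0, w0, hz0, hw0, h0, by simp⟩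
  | succ n ih =>
    obtain ⟨z, w, hz, hw, hr, hd⟩ := ih
    obtain ⟨z', w', hz', hw', hr', hd'⟩ := midpoint_step f hmap hc0 hz hw hr
    refine ⟨z', w', hz', hw', hr', ?_⟩
    rw [hd', pow_succ, ← div_div]
    linarith

set_option maxHeartbeats 2000000 in
/-- N(f) is invariant under pre- and post-composition with disc automorphisms, and f
can be normalized so that g = σ ∘ f ∘ τ fixes 0 with |g'(0)| ≥ N(f)/2. -/
theorem hN_conformal_normalization (f : ℂ → ℂ) (hf : DifferentiableOn ℂ f unitD)
    (hmap : Set.MapsTo f unitD unitD)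
    (hnc : ∃ z ∈ unitD, ∃ w ∈ unitD, f z ≠ f w) :
    (∀ σ τ : ℂ → ℂ, IsDiscAut σ → IsDiscAut τ → hN (σ ∘ f ∘ τ) = hN f) ∧
    (∃ σ τ : ℂ → ℂ, IsDiscAut σ ∧ IsDiscAut τ ∧ (σ ∘ f ∘ τ) 0 = 0 ∧
      hN f / 2 ≤ ‖deriv (σ ∘ f ∘ τ) 0‖) := by
  constructor
  · -- Part (i)
    rintro σ τ ⟨μ, a, hμ, ha, hσf⟩ ⟨lam, b, hlam, hb, hτf⟩
    have hσe : ∀ x, σ x = auT μ a x := hσf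
    have hτe : ∀ x, τ x = auT lam b x := hτf
    unfold hN
    congr 1
    ext x
    simp only [mem_setOf_eq]
    constructor
    · rintro ⟨z, hz, w, hw, hne, rfl⟩
      have hz' : auT lam b z ∈ unitD := auT_mem hlam hb hz
      have hw' : auT lam b w ∈ unitD := auT_mem hlam hb hw
      refine ⟨auT lam b z, hz', auT lam b w, hw', ?_, ?_⟩
      · intro hEq
        apply hne
        have h2 := congrArg (auT ((starRingEnd ℂ) lam) (-(lam*b))) hEq
        rwa [auT_leftinv hlam hb hz, auT_leftinv hlam hb hw] at h2
      · have e1 : (σ ∘ f ∘ τ) z = auT μ a (f (auT lam b z)) := by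
          simp only [Function.comp_apply, hσe, hτe]
        have e2 : (σ ∘ f ∘ τ) w = auT μ a (f (auT lam b w)) := by
          simp only [Function.comp_apply, hσe, hτe]
        rw [e1, e2, hbeta_auT_inv hμ ha (hmap hz') (hmap hw'),
          ← hbeta_auT_inv hlam hb hz hw]
    · rintro ⟨z, hz, w, hw, hne, rfl⟩
      have hl' : ‖(starRingEnd ℂ) lam‖ = 1 := abs_conj_one hlam
      have hb' : -(lam * b) ∈ unitD := neg_mul_mem_unitD hlam hb
      set z' := auT ((starRingEnd ℂ) lam) (-(lam*b)) z with hz'def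
      set w' := auT ((starRingEnd ℂ) lam) (-(lam*b)) w with hw'def
      have hz' : z' ∈ unitD := auT_mem hl' hb' hz
      have hw' : w' ∈ unitD := auT_mem hl' hb' hw
      have hτz : τ z' = z := by rw [hτe, hz'def, auT_rightinv hlam hb hz]
      have hτw : τ w' = w := by rw [hτe, hw'def, auT_rightinv hlam hb hw]
      refine ⟨z', hz', w', hw', ?_, ?_⟩
      · intro hEq; apply hne; rw [← hτz, ← hτw, hEq]
      · have e1 : (σ ∘ f ∘ τ) z' = auT μ a (f z) := by
          simp only [Function.comp_apply, hσe, hτz]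
        have e2 : (σ ∘ f ∘ τ) w' = auT μ a (f w) := by
          simp only [Function.comp_apply, hσe, hτw]
        rw [e1, e2, hbeta_auT_inv hμ ha (hmap hz) (hmap hw)]
        congr 1
        rw [← hbeta_auT_inv hl' hb' hz hw]
  · -- Part (ii)
    set S := {x : ℝ | ∃ z ∈ unitD, ∃ w ∈ unitD, z ≠ w ∧ x = hbeta (f z) (f w) / hbeta z w}
      with hSdef
    have hNdef : hN f = sSup S := rfl
    obtain ⟨z₀, hz₀, w₀, hw₀, hfne⟩ := hnc
    have hzwne : z₀ ≠ w₀ := by rintro rfl; exact hfne rfl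
    have hx0 : (hbeta (f z₀) (f w₀) / hbeta z₀ w₀) ∈ S := ⟨z₀, hz₀, w₀, hw₀, hzwne, rfl⟩
    have hSne : S.Nonempty := ⟨_, hx0⟩
    have hub : ∀ x ∈ S, x ≤ 1 := by
      rintro x ⟨z, hz, w, hw, hne, rfl⟩
      have hd : 0 < hbeta z w := hbeta_pos hz hw hne
      rw [div_le_one hd]
      exact L_mono (hrho_nonneg _ _) (schwarz_pick hf hmap hz hw) (hrho_lt_one hz hw)
    have hbdd : BddAbove S := ⟨1, fun x hx => hub x hx⟩
    have hNle1 : hN f ≤ 1 := by rw [hNdef]; exact csSup_le hSne hub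
    have hx0pos : 0 < hbeta (f z₀) (f w₀) / hbeta z₀ w₀ :=
      div_pos (hbeta_pos (hmap hz₀) (hmap hw₀) hfne) (hbeta_pos hz₀ hw₀ hzwne)
    have hNpos : 0 < hN f := by
      rw [hNdef]; exact lt_of_lt_of_le hx0pos (le_csSup hbdd hx0)
    set N := hN f with hNN
    have h34 : (3*N/4 : ℝ) < sSup S := by rw [← hNdef]; linarith
    obtain ⟨x1, hx1S, hx1⟩ := exists_lt_of_lt_csSup hSne h34
    obtain ⟨z1, hz1, w1, hw1, hne1, hx1e⟩ := hx1S
    rw [hx1e] at hx1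
    have hc0pos : (0:ℝ) < 3*N/4 := by linarith
    have hd0pos : 0 < hbeta z1 w1 := hbeta_pos hz1 hw1 hne1
    have hNd : (0:ℝ) < (N/16) / hbeta z1 w1 := div_pos (by linarith) hd0pos
    obtain ⟨k, hk⟩ := exists_pow_lt_of_lt_one hNd (by norm_num : (1:ℝ)/2 < 1)
    obtain ⟨z, w, hz, hw, hr, hd⟩ := exists_small_pair f hmap hc0pos hz1 hw1 hx1 k
    have hdsmall : hbeta z w ≤ N/16 := by
      have e1 : hbeta z1 w1 / 2^k = hbeta z1 w1 * (1/2)^k := by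
        rw [div_pow, one_pow]; ring
      calc hbeta z w ≤ hbeta z1 w1 / 2^k := hd
        _ = hbeta z1 w1 * (1/2)^k := e1
        _ ≤ hbeta z1 w1 * ((N/16) / hbeta z1 w1) :=
            mul_le_mul_of_nonneg_left hk.le hd0pos.le
        _ = N/16 := by field_simp
    obtain ⟨hdpos, hzw⟩ := ratio_facts hc0pos hz hw hr
    have hone : ‖(1:ℂ)‖ = 1 := norm_one
    have hfz : f z ∈ unitD := hmap hz
    have hzneg : -z ∈ unitD := neg_mem_unitD hz
    set σ : ℂ → ℂ := auT 1 (f z) with hσdef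
    set τ : ℂ → ℂ := auT 1 (-z) with hτdef
    set g : ℂ → ℂ := σ ∘ f ∘ τ with hgdef
    have hg0 : g 0 = 0 := by
      simp only [hgdef, Function.comp_apply, hτdef, auT_at_zero, hσdef, auT_zero]
    refine ⟨σ, τ, ⟨1, f z, hone, hfz, fun u => rfl⟩, ⟨1, -z, hone, hzneg, fun u => rfl⟩,
      hg0, ?_⟩
    -- derivative bound
    have hτd : DifferentiableOn ℂ τ unitD := auT_diffOn hzneg
    have hτm : MapsTo τ unitD unitD := fun x hx => auT_mem hone hzneg hx
    have hσd : DifferentiableOn ℂ σ unitD := auT_diffOn hfz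
    have hσm : MapsTo σ unitD unitD := fun x hx => auT_mem hone hfz hx
    have hgd : DifferentiableOn ℂ g unitD := hσd.comp (hf.comp hτd hτm) (hmap.comp hτm)
    have hgm : MapsTo g unitD unitD := hσm.comp (hmap.comp hτm)
    have hgd' : DifferentiableOn ℂ g (Metric.ball 0 1) := by rwa [← unitD_eq_ball]
    have hgm' : MapsTo g (Metric.ball 0 1) (Metric.ball (g 0) 1) := by
      rw [hg0]; rwa [← unitD_eq_ball]
    have hh_le : ∀ u ∈ Metric.ball (0:ℂ) 1, ‖dslope g 0 u‖ ≤ 1 := by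
      intro u hu
      have h1 := Complex.norm_dslope_le_div_of_mapsTo_ball hgd' (hgm'.mono_right Metric.ball_subset_closedBall) hu
      rwa [div_one] at h1
    have hderiv_eq : dslope g 0 0 = deriv g 0 := dslope_same g 0
    by_cases hE : ∃ u ∈ Metric.ball (0:ℂ) 1, ‖dslope g 0 u‖ = 1
    · -- affine case
      obtain ⟨u0, hu0, hu0e⟩ := hE
      have heq := Complex.affine_of_mapsTo_ball_of_exists_norm_dslope_eq_div hgd' (hgm'.mono_right Metric.ball_subset_closedBall) hu0
        (by rw [hu0e]; norm_num)
      have hev : g =ᶠ[nhds (0:ℂ)] (fun x => g 0 + (x - 0) • dslope g 0 u0) :=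
        Filter.eventuallyEq_of_mem (Metric.isOpen_ball.mem_nhds (Metric.mem_ball_self one_pos))
          heq
      have hder : deriv g 0 = dslope g 0 u0 := by
        rw [hev.deriv_eq]
        have hfun : (fun x : ℂ => g 0 + (x - 0) • dslope g 0 u0)
            = fun x : ℂ => g 0 + (x - 0) * dslope g 0 u0 := by
          funext x; rw [smul_eq_mul]
        rw [hfun]
        have hD : HasDerivAt (fun x : ℂ => g 0 + (x - 0) * dslope g 0 u0)
            (dslope g 0 u0) 0 := by
          simpa using (((hasDerivAt_id (0:ℂ)).sub_const 0).mul_const (dslope g 0 u0)).const_add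
            (g 0)
        exact hD.deriv
      rw [hder, hu0e]
      linarith
    · -- strict case : dslope g 0 maps D to D
      push_neg at hE
      set h : ℂ → ℂ := dslope g 0 with hhdef
      have hh_lt : ∀ u ∈ Metric.ball (0:ℂ) 1, ‖h u‖ < 1 := fun u hu =>
        lt_of_le_of_ne (hh_le u hu) (hE u hu)
      have hhm : MapsTo h unitD unitD := by
        intro u hu
        rw [mem_unitD]
        exact hh_lt u (by rwa [← unitD_eq_ball])
      have hhd : DifferentiableOn ℂ h unitD := by
        rw [unitD_eq_ball]
        exact (differentiableOn_dslope
          (Metric.isOpen_ball.mem_nhds (Metric.mem_ball_self one_pos))).2 hgd'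
      set w'' := auT 1 z w with hw''def
      have hw''mem : w'' ∈ unitD := auT_mem hone hz hw
      have hw''ne : w'' ≠ 0 := by
        rw [hw''def, auT, one_mul]
        exact div_ne_zero (sub_ne_zero.2 (Ne.symm hzw)) (den_ne hw hz)
      set s := hrho z w with hsdef
      have habsw'' : ‖w''‖ = s := by
        rw [hw''def, abs_auT hone, hrho_symm]
      have hs0 : 0 < s := hrho_pos hz hw hzw
      have hs1 : s < 1 := hrho_lt_one hz hw
      have h0mem : (0:ℂ) ∈ unitD := by rw [mem_unitD]; simp
      have hsp := schwarz_pick hhd hhm hw''mem h0mem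
      rw [hrho_zero_right, habsw''] at hsp
      -- value of h at w''
      have hτw : τ w'' = w := by rw [hτdef, hw''def]; exact auT_cancel hz hw
      have hgw : g w'' = auT 1 (f z) (f w) := by
        simp only [hgdef, Function.comp_apply, hτw, hσdef]
      set X := hrho (f w) (f z) with hXdef
      have habsgw : ‖g w''‖ = X := by rw [hgw, abs_auT hone]
      have hhw'' : h w'' = g w'' / w'' := by
        rw [hhdef, dslope_of_ne g hw''ne, slope_def_field, hg0, sub_zero, sub_zero]
      have habshw : ‖h w''‖ = X / s := by
        rw [hhw'', norm_div, habsgw, habsw'']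
      -- bound |h w'' - h 0| ≤ 2 s
      have hh0mem : h 0 ∈ unitD := hhm h0mem
      have hhwmem : h w'' ∈ unitD := hhm hw''mem
      have hdenpos : 0 < ‖1 - (starRingEnd ℂ) (h 0) * h w''‖ :=
        den_pos hhwmem hh0mem
      have h2s : ‖h w'' - h 0‖ ≤ 2 * s := by
        have hb1 : ‖h w'' - h 0‖
            ≤ s * ‖1 - (starRingEnd ℂ) (h 0) * h w''‖ := by
          rw [hrho_eq] at hsp
          exact (div_le_iff₀ hdenpos).1 hsp
        have hb2 : ‖1 - (starRingEnd ℂ) (h 0) * h w''‖ ≤ 2 := by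
          have hb3 := norm_sub_le 1 ((starRingEnd ℂ) (h 0) * h w'')
          have hb4 : ‖(starRingEnd ℂ) (h 0) * h w''‖ ≤ 1 := by
            rw [norm_mul, Complex.norm_conj]
            have := mem_unitD.1 hh0mem
            have := mem_unitD.1 hhwmem
            nlinarith [norm_nonneg (h 0), norm_nonneg (h w'')]
          rw [norm_one] at hb3
          linarith
        nlinarith [norm_nonneg (h w'' - h 0)]
      have hlow : X/s - 2*s ≤ ‖h 0‖ := by
        have hb5 : ‖h w''‖ - ‖h 0‖ ≤ ‖h w'' - h 0‖ := by
          have := norm_sub_norm_le (h w'') (h 0)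
          simpa using this
        rw [habshw] at hb5
        linarith
      -- hyperbolic estimates
      have hX1 : X < 1 := hrho_lt_one (hmap hw) (hmap hz)
      have hX0 : 0 ≤ X := hrho_nonneg _ _
      have himg : hbeta (f z) (f w) = Real.log ((1+X)/(1-X)) := by
        rw [hbeta_symm, hbeta, ← hXdef]
      have hLs : hbeta z w = Real.log ((1+s)/(1-s)) := by rw [hbeta, ← hsdef]
      have hratio' : 3*N/4 * hbeta z w < hbeta (f z) (f w) := (lt_div_iff₀ hdpos).1 hr
      have hssmall : s ≤ N/16 := le_trans (hsdef ▸ hrho_le_hbeta hz hw) hdsmall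
      have c1 : Real.log ((1+X)/(1-X)) ≤ 2*X/(1-X) := L_le hX0 hX1
      have c2 : 2*s/(1+s) ≤ Real.log ((1+s)/(1-s)) := L_ge hs0.le hs1
      have c3 : 3*N/4 * (2*s/(1+s)) < 2*X/(1-X) := by
        calc 3*N/4 * (2*s/(1+s)) ≤ 3*N/4 * hbeta z w := by
              rw [hLs]; exact mul_le_mul_of_nonneg_left c2 (by linarith)
          _ < hbeta (f z) (f w) := hratio'
          _ = Real.log ((1+X)/(1-X)) := himg
          _ ≤ 2*X/(1-X) := c1
      have c4 : 3*N/4 * (2*s) * (1-X) < 2*X * (1+s) := by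
        have hden1 : (0:ℝ) < 1 + s := by linarith
        have hden2 : (0:ℝ) < 1 - X := by linarith
        have e : 3*N/4 * (2*s/(1+s)) = (3*N/4*(2*s))/(1+s) := by ring
        rw [e] at c3
        exact (div_lt_div_iff₀ hden1 hden2).1 c3
      have hD : (0:ℝ) < 2+2*s+(3*N/2)*s := by
        have := mul_pos hNpos hs0
        linarith
      have hXD : (3*N/2)*s < X*(2+2*s+(3*N/2)*s) := by linarith only [c4]
      have hp1 : N*s ≤ N*(N/16) := mul_le_mul_of_nonneg_left hssmall hNpos.le
      have hp2 : s*s ≤ s*(N/16) := mul_le_mul_of_nonneg_left hssmall hs0.le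
      have hNN1 : (0:ℝ) ≤ (1-N)*N := mul_nonneg (by linarith) hNpos.le
      have b1 : N*s ≤ N/16 := by linarith only [hp1, hNN1]
      have b2 : N*N*s ≤ N/16 := by
        have := mul_nonneg (sub_nonneg.2 hNle1) (mul_nonneg hNpos.le hs0.le)
        linarith only [b1, this]
      have b3 : s*s ≤ N/256 := by
        have e1 : s*(N/16) ≤ (N/16)*(N/16) :=
          mul_le_mul_of_nonneg_right hssmall (by linarith)
        linarith only [hp2, e1, hNN1]
      have b5 : N*(s*s) ≤ N/256 := by
        have := mul_nonneg (sub_nonneg.2 hNle1) (mul_nonneg hs0.le hs0.le)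
        linarith only [b3, this]
      have hq : (N/2+2*s)*(2+2*s+(3*N/2)*s) ≤ 3*N/2 := by
        linarith only [b1, b2, b3, b5, hssmall, hNpos]
      have hpoly : ((N/2+2*s)*(2+2*s+(3*N/2)*s))*s ≤ (3*N/2)*s :=
        mul_le_mul_of_nonneg_right hq hs0.le
      have h6 : ((N/2+2*s)*s)*(2+2*s+(3*N/2)*s) < X*(2+2*s+(3*N/2)*s) := by
        linarith only [hpoly, hXD]
      have hfinal2 : (N/2+2*s)*s ≤ X := le_of_lt (lt_of_mul_lt_mul_right h6 hD.le)
      have hfinal : N/2 + 2*s ≤ X/s := by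
        rw [le_div_iff₀ hs0]
        exact hfinal2
      have habs_h0 : ‖deriv g 0‖ = ‖h 0‖ :=
        congrArg norm hderiv_eq.symm
      rw [habs_h0]
      linarith
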